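/- arXiv:2103.15531 — 2 statements merged into one kernel-verified Lean document; each statement's English description precedes it below -/
import Mathlib

section
/- Let (R, m, k) be a Noetherian local domain and M a finitely generated torsion-free R-module with β_n^R(M) = 1 for some n ≥ 0, where pd_R(M) = ∞. Then a contradiction follows; i.e., every finitely generated torsion-free module over a Noetherian local domain with some Betti number equal to 1 has finite projective dimension. -/
/-!
The free module `F n` of rank one is cyclic, and by minimality the image `I` of `d (n + 1)` lies
in `𝔪 • F n`. Exactness identifies `F n ⧸ I` with a submodule of `F (n - 1)`, or with `M` when
`n = 0`, so it is torsion-free; but a nonzero `r • e ∈ I` kills the generator in `F n ⧸ I`, putting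
`e` in `𝔪 • F n`, which Nakayama forbids. Hence `d (n + 1) = 0`, so `d (n + 2)` is onto `F (n + 1)`,
and minimality with Nakayama again gives `F (n + 1) = 0`.
-/

open CategoryTheory IsLocalRing

namespace IsLocalRing

variable {R N : Type*} [CommRing R] [IsLocalRing R] [AddCommGroup N] [Module R N]

theorem subsingleton_of_top_le_maximalIdeal_smul [Module.Finite R N]
    (h : (⊤ : Submodule R N) ≤ maximalIdeal R • ⊤) : Subsingleton N := by
  rw [← Submodule.subsingleton_iff R, ← subsingleton_iff_bot_eq_top]
  exact (Submodule.eq_bot_of_le_smul_of_le_jacobson_bot _ _ Module.Finite.fg_top h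
    (jacobson_eq_maximalIdeal ⊥ bot_ne_top).ge).symm

theorem eq_bot_of_le_maximalIdeal_smul_of_isTorsionFree_quotient [IsDomain R]
    [Module.IsPrincipal R N] {K : Submodule R N} (hK : K ≤ maximalIdeal R • ⊤)
    [Module.IsTorsionFree R (N ⧸ K)] : K = ⊥ := by
  obtain ⟨e, he⟩ := Submodule.IsPrincipal.principal (⊤ : Submodule R N)
  have : Module.Finite R N := ⟨he ▸ Submodule.fg_span_singleton e⟩
  rw [he] at hK
  refine (Submodule.eq_bot_iff K).mpr fun x hx => ?_
  obtain ⟨r, -, rfl⟩ := (Submodule.mem_smul_span_singleton ..).mp (hK hx)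
  have hre : r • K.mkQ e = 0 := by
    rwa [← map_smul, Submodule.mkQ_apply, Submodule.Quotient.mk_eq_zero]
  rcases smul_eq_zero.mp hre with rfl | he_mem
  · exact zero_smul R e
  · have : Subsingleton N := subsingleton_of_top_le_maximalIdeal_smul <| by
      rw [he]
      exact ((Submodule.span_singleton_le_iff_mem _ _).mpr
        ((Submodule.Quotient.mk_eq_zero K).mp he_mem)).trans hK
    exact Subsingleton.elim _ _

end IsLocalRing

theorem Module.isPrincipal_of_finrank_eq_one {R N : Type*} [CommRing R] [Nontrivial R]
    [AddCommGroup N] [Module R N] [Module.Free R N] (h : Module.finrank R N = 1) :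
    Module.IsPrincipal R N := by
  have : Module.Finite R N := Module.finite_of_finrank_pos (h ▸ Nat.one_pos)
  let b := Module.finBasisOfFinrankEq R N h
  exact ⟨⟨b 0, by rw [← b.span_eq, Set.range_unique]; rfl⟩⟩

theorem LinearMap.isTorsionFree_quotient_ker {R N T : Type*} [CommRing R] [AddCommGroup N]
    [Module R N] [AddCommGroup T] [Module R T] [Module.IsTorsionFree R T] (ψ : N →ₗ[R] T) :
    Module.IsTorsionFree R (N ⧸ LinearMap.ker ψ) :=
  ψ.quotKerEquivRange.injective.moduleIsTorsionFree _ (map_smul _)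

namespace ChainComplex

variable {R : Type*} [Ring R] (F : ChainComplex (ModuleCat R) ℕ)

theorem range_d_eq_ker_d (j : ℕ) (h : F.ExactAt (j + 1)) :
    LinearMap.range (F.d (j + 2) (j + 1)).hom = LinearMap.ker (F.d (j + 1) j).hom := by
  rw [F.exactAt_iff' (j + 2) (j + 1) j (by simp) (by simp)] at h
  exact h.moduleCat_range_eq_ker

theorem range_d_one_zero_eq_ker_pOpcycles :
    LinearMap.range (F.d 1 0).hom = LinearMap.ker (F.pOpcycles 0).hom :=
  (ShortComplex.exact_of_g_is_cokernel (S := ShortComplex.mk _ _ (F.d_pOpcycles 1 0))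
    (F.opcyclesIsCokernel 1 0 (by simp))).moduleCat_range_eq_ker

end ChainComplex

theorem stmt6_general (R : Type) [CommRing R] [IsDomain R] [IsLocalRing R]
    (M : Type) [AddCommGroup M] [Module R M]
    (htf : NoZeroSMulDivisors R M)
    (F : ChainComplex (ModuleCat R) ℕ)
    (hfree : ∀ i, Module.Free R (F.X i)) (hfg : ∀ i, Module.Finite R (F.X i))
    (hmin : ∀ i, LinearMap.range (F.d (i + 1) i).hom ≤
      (maximalIdeal R) • (⊤ : Submodule R (F.X i)))
    (hres0 : Nonempty ((F.homology 0) ≅ ModuleCat.of R M))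
    (hres : ∀ i, i ≠ 0 → Subsingleton (F.homology i))
    (n : ℕ) (hn : Module.finrank R (F.X n) = 1) :
    ∃ m, Subsingleton (F.X m) := by
  have hexact (j : ℕ) : F.ExactAt (j + 1) := by
    have := hres (j + 1) j.succ_ne_zero
    exact (F.exactAt_iff_isZero_homology _).mpr (ModuleCat.isZero_of_subsingleton _)
  have htorsionFree : Module.IsTorsionFree R (F.X n ⧸ LinearMap.range (F.d (n + 1) n).hom) := by
    cases n with
    | zero =>
      let e := (F.isoHomologyι₀.symm ≪≫ hres0.some).toLinearEquiv
      have : Module.IsTorsionFree R (F.opcycles 0) :=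
        e.injective.moduleIsTorsionFree _ (map_smul e)
      rw [F.range_d_one_zero_eq_ker_pOpcycles]
      exact LinearMap.isTorsionFree_quotient_ker _
    | succ m =>
      have := hfree m
      rw [F.range_d_eq_ker_d m (hexact m)]
      exact LinearMap.isTorsionFree_quotient_ker _
  have := hfree n
  have := Module.isPrincipal_of_finrank_eq_one hn
  have hd : (F.d (n + 1) n).hom = 0 :=
    LinearMap.range_eq_bot.mp (eq_bot_of_le_maximalIdeal_smul_of_isTorsionFree_quotient (hmin n))
  have := hfg (n + 1)
  refine ⟨n + 1, subsingleton_of_top_le_maximalIdeal_smul (R := R) ?_⟩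
  calc (⊤ : Submodule R (F.X (n + 1)))
      = LinearMap.ker (F.d (n + 1) n).hom := by rw [hd, LinearMap.ker_zero]
    _ = LinearMap.range (F.d (n + 2) (n + 1)).hom := (F.range_d_eq_ker_d n (hexact n)).symm
    _ ≤ _ := hmin (n + 1)

/-- Over a Noetherian local domain, a finitely generated torsion-free module with some
Betti number equal to `1` has finite projective dimension: some term of its minimal
free resolution vanishes. -/
theorem stmt6 (R : Type) [CommRing R] [IsDomain R] [IsNoetherianRing R] [IsLocalRing R]
    (M : Type) [AddCommGroup M] [Module R M] [Module.Finite R M]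
    (htf : NoZeroSMulDivisors R M)
    (F : ChainComplex (ModuleCat R) ℕ)
    (hfree : ∀ i, Module.Free R (F.X i)) (hfg : ∀ i, Module.Finite R (F.X i))
    (hmin : ∀ i, LinearMap.range (F.d (i + 1) i).hom ≤
      (maximalIdeal R) • (⊤ : Submodule R (F.X i)))
    (hres0 : Nonempty ((F.homology 0) ≅ ModuleCat.of R M))
    (hres : ∀ i, i ≠ 0 → Subsingleton (F.homology i))
    (n : ℕ) (hn : Module.finrank R (F.X n) = 1) :
    ∃ m, Subsingleton (F.X m) :=
  stmt6_general R M htf F hfree hfg hmin hres0 hres n hn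
end

section
/- Let (R, m, k) be a d-dimensional Cohen-Macaulay Noetherian local ring, C a semidualizing R-module, and x_1,...,x_d ∈ m an R-regular sequence. Set R̄ := R/(x_1,...,x_d) and C̄ := C/(x_1,...,x_d)C. Then C ≅ R as R-modules if and only if C̄ ≅ R̄ as R̄-modules. -/
open CategoryTheory IsLocalRing
open scoped TensorProduct

noncomputable section

/-- The `i`-th Ext module `Ext^i_R(M, N)`. -/
def extMod (R : Type) [CommRing R] (M N : Type) [AddCommGroup M] [Module R M]
    [AddCommGroup N] [Module R N] (i : ℕ) : ModuleCat R :=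
  ((Ext R (ModuleCat R) i).obj (Opposite.op (ModuleCat.of R M))).obj (ModuleCat.of R N)

/-- A semidualizing module: finitely generated, the homothety map `R → Hom_R(C,C)` is
bijective, and `Ext^i_R(C,C) = 0` for all `i > 0`. -/
def IsSemidualizingModule (R : Type) [CommRing R] (C : Type) [AddCommGroup C] [Module R C] :
    Prop :=
  Module.Finite R C ∧ Function.Bijective (LinearMap.lsmul R C) ∧
    ∀ i : ℕ, 0 < i → Subsingleton (extMod R C C i)

/-- Depth of `R` measured against `R/J`: the least `n` with `Ext^n_R(R/J, R) ≠ 0`. -/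
def ringDepth (R : Type) [CommRing R] (J : Ideal R) : ℕ :=
  sInf {n : ℕ | ¬ Subsingleton (extMod R (R ⧸ J) R n)}

/-- For a semidualizing module `C` over a `d`-dimensional Cohen-Macaulay Noetherian
local ring `R` and an `R`-regular sequence `x₁, …, x_d ∈ m`, with `R̄ = R/(x)` and
`C̄ = C/(x)C = R̄ ⊗_R C`, one has `C ≅ R` as `R`-modules iff `C̄ ≅ R̄` as `R̄`-modules. -/
theorem stmt9 (R : Type) [CommRing R] [IsNoetherianRing R] [IsLocalRing R]
    (d : ℕ) (hd : ringKrullDim R = d)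
    (hCM : (ringDepth R (maximalIdeal R) : WithBot ℕ∞) = ringKrullDim R)
    (C : Type) [AddCommGroup C] [Module R C] (hC : IsSemidualizingModule R C)
    (xs : List R) (hlen : xs.length = d) (hxs : ∀ x ∈ xs, x ∈ maximalIdeal R)
    (hreg : RingTheory.Sequence.IsRegular R xs) :
    Nonempty (C ≃ₗ[R] R) ↔
      Nonempty (((R ⧸ Ideal.span {r : R | r ∈ xs}) ⊗[R] C) ≃ₗ[R ⧸ Ideal.span {r : R | r ∈ xs}]
        (R ⧸ Ideal.span {r : R | r ∈ xs})) := by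
  set I : Ideal R := Ideal.span {r : R | r ∈ xs} with hI
  obtain ⟨hfin, hbij, -⟩ := hC
  constructor
  · rintro ⟨e⟩
    exact ⟨(LinearEquiv.baseChange R (R ⧸ I) C R e).trans
      (Algebra.TensorProduct.rid R (R ⧸ I) (R ⧸ I)).toLinearEquiv⟩
  · rintro ⟨e⟩
    -- get an R-linear equiv C ⧸ I•⊤ ≃ R ⧸ I
    have ψ : (C ⧸ (I • (⊤ : Submodule R C))) ≃ₗ[R] (R ⧸ I) :=
      (TensorProduct.quotTensorEquivQuotSMul C I).symm.trans (e.restrictScalars R)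
    -- R ⧸ I is cyclic as R-module, generated by 1
    have h1 : Submodule.span R {(1 : R ⧸ I)} = ⊤ := by
      rw [eq_top_iff]
      rintro x -
      obtain ⟨r, rfl⟩ := Ideal.Quotient.mk_surjective x
      have : (Ideal.Quotient.mk I) r = r • (1 : R ⧸ I) := by
        simp [Algebra.smul_def]
      rw [this]
      exact Submodule.smul_mem _ _ (Submodule.mem_span_singleton_self _)
    -- so C ⧸ I•⊤ is generated by c̄ := ψ.symm 1
    obtain ⟨c, hc⟩ := Submodule.Quotient.mk_surjective (I • (⊤ : Submodule R C)) (ψ.symm 1)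
    have hspan1 : Submodule.span R {ψ.symm 1} = ⊤ := by
      have hm := Submodule.map_span (ψ.symm : (R ⧸ I) →ₗ[R] (C ⧸ I • (⊤ : Submodule R C))) {1}
      rw [Set.image_singleton, h1, Submodule.map_top, LinearEquiv.range] at hm
      exact hm.symm
    have hspan : (⊤ : Submodule R C) ≤ Submodule.span R {c} ⊔ I • (⊤ : Submodule R C) := by
      intro y _
      have hy : (Submodule.Quotient.mk y : C ⧸ I • (⊤ : Submodule R C)) ∈
          Submodule.span R {ψ.symm 1} := hspan1 ▸ Submodule.mem_top
      rw [Submodule.mem_span_singleton] at hy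
      obtain ⟨a, ha⟩ := hy
      rw [← hc, ← Submodule.Quotient.mk_smul, Submodule.Quotient.eq] at ha
      have hy2 : y = a • c - (a • c - y) := by abel
      rw [hy2]
      exact Submodule.sub_mem _
        (Submodule.mem_sup_left (Submodule.smul_mem _ _ (Submodule.mem_span_singleton_self _)))
        (Submodule.mem_sup_right ha)
    -- Nakayama: C = span {c}
    have hIm : I ≤ Ideal.jacobson ⊥ := by
      refine le_trans ?_ (IsLocalRing.maximalIdeal_le_jacobson ⊥)
      rw [hI, Ideal.span_le]
      exact hxs
    have htop : (⊤ : Submodule R C) ≤ Submodule.span R {c} :=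
      Submodule.le_of_le_smul_of_le_jacobson_bot (Module.finite_def.mp hfin) hIm hspan
    -- φ : R → C, r ↦ r • c is bijective
    set φ : R →ₗ[R] C := (LinearMap.lsmul R C).flip c with hφ
    have hsurj : Function.Surjective φ := by
      intro y
      have : y ∈ Submodule.span R {c} := htop Submodule.mem_top
      rw [Submodule.mem_span_singleton] at this
      obtain ⟨a, ha⟩ := this
      exact ⟨a, ha⟩
    have hinj : Function.Injective φ := by
      rw [injective_iff_map_eq_zero]
      intro r hr
      apply hbij.1
      rw [map_zero]
      ext y
      obtain ⟨a, rfl⟩ := hsurj y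
      simp only [LinearMap.lsmul_apply, LinearMap.zero_apply]
      have : r • (φ a) = a • (r • c) := by
        simp only [hφ, LinearMap.flip_apply, LinearMap.lsmul_apply, smul_smul, mul_comm]
      rw [this]
      have : r • c = 0 := hr
      rw [this, smul_zero]
    exact ⟨(LinearEquiv.ofBijective φ ⟨hinj, hsurj⟩).symm⟩


end
end
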